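/- Hoeffding's covariance identity: for nonnegative random variables X₁, X₂ with finite second moments, joint CDF H(x₁,x₂) and marginal CDFs F₁, F₂, one has Cov(X₁,X₂) = ∫₀^∞ ∫₀^∞ (H(x₁,x₂) − F₁(x₁)F₂(x₂)) dx₁ dx₂. -/

import Mathlib

/-!
Replacing every event `{Xᵢ ≤ xᵢ}` by its complement `{xᵢ < Xᵢ}` does not change the integrand,
since `P(A ∩ B) - P(A) P(B) = P(Aᶜ ∩ Bᶜ) - P(Aᶜ) P(Bᶜ)`. In terms of survival functions the
identity is a layer-cake formula: by Tonelli applied to `𝟙{x₁ < X₁} 𝟙{x₂ < X₂}`,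
`E[X₁ X₂] = ∫∫ P(x₁ < X₁, x₂ < X₂)`, while `E[Xᵢ] = ∫ P(x < Xᵢ)`, and `E[X₁] E[X₂]` is the
integral of the product of the marginal survival functions over the quadrant.
-/

open MeasureTheory Set

local notation "ν₊" => Measure.prod (volume.restrict (Ioi (0 : ℝ))) (volume.restrict (Ioi (0 : ℝ)))

section

variable {Ω : Type*} [MeasurableSpace Ω] {μ : Measure Ω}

lemma measureReal_inter_sub_mul_eq_compl [IsProbabilityMeasure μ] {s t : Set Ω}
    (hs : MeasurableSet s) (ht : MeasurableSet t) :
    μ.real (s ∩ t) - μ.real s * μ.real t = μ.real (sᶜ ∩ tᶜ) - μ.real sᶜ * μ.real tᶜ := by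
  have hunion := measureReal_union_add_inter (μ := μ) (s := s) ht
  rw [← compl_union, probReal_compl_eq_one_sub (hs.union ht), probReal_compl_eq_one_sub hs,
    probReal_compl_eq_one_sub ht]
  linarith

lemma volume_restrict_Ioi_zero_Iio (a : ℝ) :
    volume.restrict (Ioi 0) (Iio a) = ENNReal.ofReal a := by
  rw [Measure.restrict_apply measurableSet_Iio, Iio_inter_Ioi, Real.volume_Ioo, sub_zero]

variable {X X₁ X₂ : Ω → ℝ}

lemma integrable_measureReal_lt [IsFiniteMeasure μ] (hX : Integrable X μ) (hpos : 0 ≤ᵐ[μ] X) :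
    Integrable (fun t => μ.real {ω | t < X ω}) (volume.restrict (Ioi 0)) := by
  refine integrable_toReal_of_lintegral_ne_top ?_ ?_
  · exact (Antitone.measurable (f := fun t : ℝ => μ {ω | t < X ω})
      fun _ _ hst => measure_mono fun _ h => hst.trans_lt h).aemeasurable
  · rw [← lintegral_eq_lintegral_meas_lt μ hpos hX.aemeasurable]
    exact hX.lintegral_lt_top.ne

lemma measurableSet_lt_and_lt (hX₁ : Measurable X₁) (hX₂ : Measurable X₂) :
    MeasurableSet {q : (ℝ × ℝ) × Ω | q.1.1 < X₁ q.2 ∧ q.1.2 < X₂ q.2} :=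
  (measurableSet_lt (measurable_fst.comp measurable_fst) (hX₁.comp measurable_snd)).inter
    (measurableSet_lt (measurable_snd.comp measurable_fst) (hX₂.comp measurable_snd))

lemma measurable_measure_lt_and_lt [SFinite μ] (hX₁ : Measurable X₁) (hX₂ : Measurable X₂) :
    Measurable fun p : ℝ × ℝ => μ {ω | p.1 < X₁ ω ∧ p.2 < X₂ ω} :=
  measurable_measure_prodMk_left (measurableSet_lt_and_lt hX₁ hX₂)

lemma lintegral_measure_lt_and_lt_eq_lintegral_ofReal_mul [SFinite μ] (hX₁ : Measurable X₁)
    (hX₂ : Measurable X₂) :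
    ∫⁻ p, μ {ω | p.1 < X₁ ω ∧ p.2 < X₂ ω} ∂ν₊
      = ∫⁻ ω, ENNReal.ofReal (X₁ ω) * ENNReal.ofReal (X₂ ω) ∂μ := by
  have hS := measurableSet_lt_and_lt hX₁ hX₂
  calc ∫⁻ p, μ {ω | p.1 < X₁ ω ∧ p.2 < X₂ ω} ∂ν₊
      = Measure.prod ν₊ μ _ :=
        (Measure.prod_apply hS).symm
    _ = ∫⁻ ω, ν₊
          (Iio (X₁ ω) ×ˢ Iio (X₂ ω)) ∂μ := Measure.prod_apply_symm hS
    _ = ∫⁻ ω, ENNReal.ofReal (X₁ ω) * ENNReal.ofReal (X₂ ω) ∂μ := by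
        simp_rw [Measure.prod_prod, volume_restrict_Ioi_zero_Iio]

lemma integrable_measureReal_lt_and_lt [IsFiniteMeasure μ] (hX₁ : Measurable X₁)
    (hX₂ : Measurable X₂) (hint : Integrable (fun ω => X₁ ω * X₂ ω) μ) :
    Integrable (fun p : ℝ × ℝ => μ.real {ω | p.1 < X₁ ω ∧ p.2 < X₂ ω})
      ν₊ := by
  refine integrable_toReal_of_lintegral_ne_top
    (measurable_measure_lt_and_lt hX₁ hX₂).aemeasurable ?_
  rw [lintegral_measure_lt_and_lt_eq_lintegral_ofReal_mul hX₁ hX₂]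
  refine ne_top_of_le_ne_top hint.2.ne (lintegral_mono fun ω => ?_)
  rw [enorm_mul]
  exact mul_le_mul' (Real.ofReal_le_enorm _) (Real.ofReal_le_enorm _)

lemma integral_mul_eq_integral_measureReal_lt_and_lt [IsFiniteMeasure μ] (hX₁ : Measurable X₁)
    (hX₂ : Measurable X₂) (hpos₁ : 0 ≤ᵐ[μ] X₁) (hpos₂ : 0 ≤ᵐ[μ] X₂) :
    ∫ ω, X₁ ω * X₂ ω ∂μ = ∫ p, μ.real {ω | p.1 < X₁ ω ∧ p.2 < X₂ ω}
      ∂ν₊ := by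
  have hofReal_mul : (fun ω => ENNReal.ofReal (X₁ ω * X₂ ω))
      =ᵐ[μ] fun ω => ENNReal.ofReal (X₁ ω) * ENNReal.ofReal (X₂ ω) := by
    filter_upwards [hpos₁] with ω h₁ using ENNReal.ofReal_mul h₁
  simp_rw [measureReal_def]
  rw [integral_toReal (measurable_measure_lt_and_lt hX₁ hX₂).aemeasurable
    (ae_of_all _ fun _ => measure_lt_top μ _),
    lintegral_measure_lt_and_lt_eq_lintegral_ofReal_mul hX₁ hX₂,
    integral_eq_lintegral_of_nonneg_ae (f := fun ω => X₁ ω * X₂ ω)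
      (by filter_upwards [hpos₁, hpos₂] with ω h₁ h₂ using mul_nonneg h₁ h₂)
      (hX₁.mul hX₂).aestronglyMeasurable, lintegral_congr_ae hofReal_mul]

end

/-- Hoeffding's covariance identity: for nonnegative random variables `X₁, X₂` with
finite second moments, joint CDF `H` and marginal CDFs `F₁, F₂`,
`Cov(X₁,X₂) = ∫₀^∞ ∫₀^∞ (H(x₁,x₂) - F₁(x₁) F₂(x₂)) dx₁ dx₂`. -/
theorem hoeffding_covariance_identity
    {Ω : Type*} [MeasurableSpace Ω] (μ : Measure Ω) [IsProbabilityMeasure μ]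
    (X₁ X₂ : Ω → ℝ) (hX₁ : Measurable X₁) (hX₂ : Measurable X₂)
    (hpos₁ : ∀ ω, 0 ≤ X₁ ω) (hpos₂ : ∀ ω, 0 ≤ X₂ ω)
    (hL₁ : MemLp X₁ 2 μ) (hL₂ : MemLp X₂ 2 μ) :
    (∫ ω, X₁ ω * X₂ ω ∂μ) - (∫ ω, X₁ ω ∂μ) * (∫ ω, X₂ ω ∂μ)
      = ∫ x₁ in Ioi (0:ℝ), ∫ x₂ in Ioi (0:ℝ),
          ((μ {ω | X₁ ω ≤ x₁ ∧ X₂ ω ≤ x₂}).toReal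
            - (μ {ω | X₁ ω ≤ x₁}).toReal * (μ {ω | X₂ ω ≤ x₂}).toReal) := by
  have hint₁ : Integrable X₁ μ := hL₁.integrable one_le_two
  have hint₂ : Integrable X₂ μ := hL₂.integrable one_le_two
  have hpos₁' : 0 ≤ᵐ[μ] X₁ := ae_of_all _ hpos₁
  have hpos₂' : 0 ≤ᵐ[μ] X₂ := ae_of_all _ hpos₂
  have hjoint := integrable_measureReal_lt_and_lt hX₁ hX₂ (hL₁.integrable_mul hL₂)
  have hmarg := (integrable_measureReal_lt hint₁ hpos₁').mul_prod
    (integrable_measureReal_lt hint₂ hpos₂')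
  have hcdf_survival : ∀ p : ℝ × ℝ,
      μ.real {ω | X₁ ω ≤ p.1 ∧ X₂ ω ≤ p.2} - μ.real {ω | X₁ ω ≤ p.1} * μ.real {ω | X₂ ω ≤ p.2}
        = μ.real {ω | p.1 < X₁ ω ∧ p.2 < X₂ ω}
          - μ.real {ω | p.1 < X₁ ω} * μ.real {ω | p.2 < X₂ ω} := fun p => by
    simpa only [compl_ofPred, not_le, ofPred_and] using measureReal_inter_sub_mul_eq_compl
      (measurableSet_le hX₁ measurable_const) (measurableSet_le hX₂ measurable_const)
  calc _ = ∫ p, (μ.real {ω | p.1 < X₁ ω ∧ p.2 < X₂ ω}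
          - μ.real {ω | p.1 < X₁ ω} * μ.real {ω | p.2 < X₂ ω}) ∂ν₊ := by
        rw [integral_sub hjoint hmarg,
          integral_prod_mul (fun t => μ.real {ω | t < X₁ ω}) (fun t => μ.real {ω | t < X₂ ω}),
          integral_mul_eq_integral_measureReal_lt_and_lt hX₁ hX₂ hpos₁' hpos₂',
          hint₁.integral_eq_integral_meas_lt hpos₁', hint₂.integral_eq_integral_meas_lt hpos₂']
    _ = _ := by
        simp_rw [← hcdf_survival]
        exact integral_prod _
          ((hjoint.sub hmarg).congr (ae_of_all _ fun p => (hcdf_survival p).symm))
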